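/- Let f = Σ_{β ∈ I(n,d)} f_β x^β be a homogeneous polynomial of degree d ≥ 1 in n variables with real coefficients. Then max_{β ∈ I(n,d)} f_β β!/d! − min_{β ∈ I(n,d)} f_β β!/d! ≤ C(2d−1, d) · d^d · (f̄ − f̲), where β! = β_1!···β_n! and C(2d−1,d) is the binomial coefficient. -/

import Mathlib

/-!
For `β ∈ I(n,d)`, the mixed forward difference `∑_{α ≤ β} (-1)^{|β - α|} C(β, α) f(α)` at the
integer points below `β` extracts `c_β β!` from a degree-`d` form, because `Δ^b x^g` at `0` is `0`
for `g < b` and `b!` for `g = b`. Apply it to `g = f - ((f̲ + f̄)/2) (∑ xᵢ)^d`: its extracted value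
is `c_β β! - d! (f̲ + f̄)/2`, and by homogeneity `|g(α)| ≤ |α|^d (f̄ - f̲)/2`, which vanishes at
`α = 0`. Since `∑_{0 ≠ α ≤ β} C(β, α) = 2^d - 1`, every Bernstein coefficient lies within
`(2^d - 1) d^d (f̄ - f̲) / (2 d!)` of `(f̲ + f̄)/2`, and `2^d - 1 ≤ d^d ≤ (2d-1)⋯d = d! C(2d-1, d)`.
-/

open Finset

noncomputable section

/-- Falling factorial `t^(d) = t (t-1) ⋯ (t-d+1)`. -/
def fall (t : ℝ) : ℕ → ℝ
  | 0 => 1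
  | d + 1 => fall t d * (t - (d : ℝ))

/-- The regular grid `Δ(n,r) = {x ∈ Δ_n : r·x ∈ ℕ^n}`. -/
def regularGrid (n r : ℕ) : Set (Fin n → ℝ) :=
  {x ∈ stdSimplex ℝ (Fin n) | ∀ i, ∃ k : ℕ, (r : ℝ) * x i = (k : ℝ)}

/-- `f_{Δ(n,r)}`, the minimum of `f` over the regular grid. -/
def minGrid (n r : ℕ) (f : (Fin n → ℝ) → ℝ) : ℝ :=
  sInf (f '' regularGrid n r)

/-- `f̲`, the minimum of `f` over the standard simplex. -/
def minSimplex (n : ℕ) (f : (Fin n → ℝ) → ℝ) : ℝ :=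
  sInf (f '' stdSimplex ℝ (Fin n))

/-- `f̄`, the maximum of `f` over the standard simplex. -/
def maxSimplex (n : ℕ) (f : (Fin n → ℝ) → ℝ) : ℝ :=
  sSup (f '' stdSimplex ℝ (Fin n))

/-- The homogeneous polynomial of degree `d` with coefficients `c`,
`f(x) = Σ_{β ∈ I(n,d)} c_β x^β`. -/
def homPoly (n d : ℕ) (c : (Fin n → ℕ) → ℝ) (x : Fin n → ℝ) : ℝ :=
  ∑ β ∈ Finset.Nat.antidiagonalTuple n d, c β * ∏ i, x i ^ β i

/-- The Pólya-type lower bound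
`f_min^{(r-d)} = min_{α ∈ I(n,r)} Σ_{β ∈ I(n,d)} c_β α^{(β)} / r^{(d)}`. -/
def polyaBound (n d r : ℕ) (c : (Fin n → ℕ) → ℝ) : ℝ :=
  sInf ((fun α : Fin n → ℕ =>
      (∑ β ∈ Finset.Nat.antidiagonalTuple n d,
        c β * ∏ i, fall ((α i : ℕ) : ℝ) (β i)) / fall (r : ℝ) d) ''
    {α : Fin n → ℕ | ∑ i, α i = r})

/-- The set of Bernstein coefficients `{c_β β!/d! : β ∈ I(n,d)}` of the homogeneous
polynomial with coefficients `c`. -/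
def bernsteinCoeffs (n d : ℕ) (c : (Fin n → ℕ) → ℝ) : Set ℝ :=
  (fun β : Fin n → ℕ => c β * (∏ i, ((β i).factorial : ℝ)) / (d.factorial : ℝ)) ''
    {β : Fin n → ℕ | ∑ i, β i = d}

lemma sum_Iic_neg_one_pow_mul_choose_mul_pow (b g : ℕ) :
    ∑ a ∈ Iic b, (-1 : ℝ) ^ (b - a) * b.choose a * (a : ℝ) ^ g =
      (fwdDiff 1)^[b] (fun r : ℝ => r ^ g) 0 := by
  rw [fwdDiff_iter_eq_sum_shift, ← Nat.range_succ_eq_Iic]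
  refine sum_congr rfl fun a _ => ?_
  simp [zsmul_eq_mul]

section FiniteDifferences

variable {ι : Type*} [Fintype ι]

def finDiffWeight (β α : ι → ℕ) : ℝ :=
  ∏ i, (-1 : ℝ) ^ (β i - α i) * (β i).choose (α i)

lemma abs_finDiffWeight (β α : ι → ℕ) :
    |finDiffWeight β α| = ∏ i, ((β i).choose (α i) : ℝ) := by
  simp [finDiffWeight, abs_prod, abs_mul]

variable [DecidableEq ι]

lemma Pi.Iic_eq_piFinset (β : ι → ℕ) : Iic β = Fintype.piFinset fun i => Iic (β i) := rfl

lemma sum_Iic_finDiffWeight_mul_prod_pow (β γ : ι → ℕ) :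
    ∑ α ∈ Iic β, finDiffWeight β α * ∏ i, (α i : ℝ) ^ γ i =
      ∏ i, (fwdDiff 1)^[β i] (fun r : ℝ => r ^ γ i) 0 := by
  simp_rw [← sum_Iic_neg_one_pow_mul_choose_mul_pow, prod_univ_sum, finDiffWeight,
    ← prod_mul_distrib]
  rfl

lemma sum_Iic_finDiffWeight_mul_prod_pow_of_sum_eq {β γ : ι → ℕ}
    (h : ∑ i, γ i = ∑ i, β i) :
    ∑ α ∈ Iic β, finDiffWeight β α * ∏ i, (α i : ℝ) ^ γ i =
      if γ = β then ∏ i, ((β i).factorial : ℝ) else 0 := by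
  rw [sum_Iic_finDiffWeight_mul_prod_pow]
  split_ifs with hγβ
  · subst hγβ
    simp [fwdDiff_iter_eq_factorial]
  · obtain ⟨i, hi⟩ : ∃ i, γ i < β i := by
      by_contra! hle
      exact hγβ (funext fun i => ((sum_eq_sum_iff_of_le fun i _ => hle i).1 h.symm i
        (mem_univ i)).symm)
    exact prod_eq_zero (mem_univ i) (by simp [fwdDiff_iter_pow_eq_zero_of_lt hi])

lemma sum_Iic_finDiffWeight_mul_sum {β : ι → ℕ} {S : Finset (ι → ℕ)}
    (hS : ∀ γ ∈ S, ∑ i, γ i = ∑ i, β i) (hβS : β ∈ S) (e : (ι → ℕ) → ℝ) :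
    ∑ α ∈ Iic β, finDiffWeight β α * ∑ γ ∈ S, e γ * ∏ i, (α i : ℝ) ^ γ i =
      e β * ∏ i, ((β i).factorial : ℝ) := by
  simp_rw [mul_sum, mul_left_comm (finDiffWeight β _)]
  rw [sum_comm, sum_eq_single_of_mem β hβS]
  · rw [← mul_sum, sum_Iic_finDiffWeight_mul_prod_pow_of_sum_eq rfl, if_pos rfl]
  · intro γ hγ hne
    rw [← mul_sum, sum_Iic_finDiffWeight_mul_prod_pow_of_sum_eq (hS γ hγ), if_neg hne,
      mul_zero]

lemma sum_Iic_prod_choose (β : ι → ℕ) :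
    ∑ α ∈ Iic β, ∏ i, (β i).choose (α i) = 2 ^ ∑ i, β i := by
  rw [← prod_pow_eq_pow_sum, Pi.Iic_eq_piFinset, ← prod_univ_sum]
  simp [← Nat.range_succ_eq_Iic, Nat.sum_range_choose]

lemma sum_Iic_prod_choose_mul_sum_pow_le (β : ι → ℕ) {d : ℕ} (hd : d ≠ 0) :
    ∑ α ∈ Iic β, (∏ i, (β i).choose (α i)) * (∑ i, α i) ^ d + (∑ i, β i) ^ d ≤
      2 ^ (∑ i, β i) * (∑ i, β i) ^ d := by
  have h0 : (0 : ι → ℕ) ∈ Iic β := mem_Iic.2 fun i => Nat.zero_le (β i)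
  have hchoose := sum_Iic_prod_choose β
  rw [← add_sum_erase _ _ h0] at hchoose ⊢
  have hle : ∑ α ∈ (Iic β).erase 0, (∏ i, (β i).choose (α i)) * (∑ i, α i) ^ d ≤
      ∑ α ∈ (Iic β).erase 0, (∏ i, (β i).choose (α i)) * (∑ i, β i) ^ d :=
    sum_le_sum fun α hα => Nat.mul_le_mul_left _ <| Nat.pow_le_pow_left
      (sum_le_sum fun i _ => mem_Iic.1 (mem_of_mem_erase hα) i) d
  simp only [Pi.zero_apply, Nat.choose_zero_right, prod_const_one, sum_const_zero,
    zero_pow hd, mul_zero, zero_add] at hchoose ⊢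
  rw [← hchoose, add_mul, one_mul, sum_mul]
  linarith

lemma sum_Iic_finDiffWeight_mul_sum_pow (β : ι → ℕ) :
    ∑ α ∈ Iic β, finDiffWeight β α * (∑ i, (α i : ℝ)) ^ ∑ i, β i =
      ((∑ i, β i).factorial : ℝ) := by
  simp_rw [sum_pow_eq_sum_piAntidiag]
  rw [sum_Iic_finDiffWeight_mul_sum (fun γ hγ => (mem_piAntidiag.1 hγ).1) (by simp)]
  exact_mod_cast (mul_comm _ _).trans (Nat.multinomial_spec univ β)

end FiniteDifferences

section HomogeneousPolynomials

variable {n d : ℕ}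

lemma sum_Iic_finDiffWeight_mul_homPoly (c : (Fin n → ℕ) → ℝ) {β : Fin n → ℕ}
    (hβ : ∑ i, β i = d) :
    ∑ α ∈ Iic β, finDiffWeight β α * homPoly n d c (fun i => (α i : ℝ)) =
      c β * ∏ i, ((β i).factorial : ℝ) :=
  sum_Iic_finDiffWeight_mul_sum (fun γ hγ => by rw [hβ, Nat.mem_antidiagonalTuple.1 hγ])
    (Nat.mem_antidiagonalTuple.2 hβ) c

lemma homPoly_smul (c : (Fin n → ℕ) → ℝ) (t : ℝ) (x : Fin n → ℝ) :
    homPoly n d c (t • x) = t ^ d * homPoly n d c x := by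
  simp only [homPoly, mul_sum, Pi.smul_apply, smul_eq_mul, mul_pow, prod_mul_distrib]
  refine sum_congr rfl fun γ hγ => ?_
  rw [prod_pow_eq_pow_sum, Nat.mem_antidiagonalTuple.1 hγ]
  ring

lemma continuous_homPoly (c : (Fin n → ℕ) → ℝ) : Continuous (homPoly n d c) := by
  unfold homPoly
  fun_prop

end HomogeneousPolynomials

lemma exists_eq_sum_smul_mem_stdSimplex {ι : Type*} [Fintype ι] [Nonempty ι] {x : ι → ℝ}
    (hx : 0 ≤ x) : ∃ y ∈ stdSimplex ℝ ι, x = (∑ i, x i) • y := by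
  classical
  rcases (sum_nonneg fun i _ => hx i).eq_or_lt with h | h
  · obtain ⟨i⟩ := ‹Nonempty ι›
    refine ⟨_, single_mem_stdSimplex ℝ i, ?_⟩
    rw [← h, zero_smul]
    exact funext fun j => (sum_eq_zero_iff_of_nonneg fun j _ => hx j).1 h.symm j (mem_univ j)
  · refine ⟨(∑ i, x i)⁻¹ • x, ⟨fun i => ?_, ?_⟩, ?_⟩
    · exact smul_nonneg (inv_nonneg.2 h.le) (hx i)
    · simp [← mul_sum, inv_mul_cancel₀ h.ne']
    · rw [smul_smul, mul_inv_cancel₀ h.ne', one_smul]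

lemma le_maxSimplex {n : ℕ} {f : (Fin n → ℝ) → ℝ} (hf : ContinuousOn f (stdSimplex ℝ (Fin n)))
    {x : Fin n → ℝ} (hx : x ∈ stdSimplex ℝ (Fin n)) : f x ≤ maxSimplex n f :=
  le_csSup ((isCompact_stdSimplex _ _).image_of_continuousOn hf).bddAbove ⟨x, hx, rfl⟩

lemma minSimplex_le {n : ℕ} {f : (Fin n → ℝ) → ℝ} (hf : ContinuousOn f (stdSimplex ℝ (Fin n)))
    {x : Fin n → ℝ} (hx : x ∈ stdSimplex ℝ (Fin n)) : minSimplex n f ≤ f x :=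
  csInf_le ((isCompact_stdSimplex _ _).image_of_continuousOn hf).bddBelow ⟨x, hx, rfl⟩

lemma two_pow_sub_one_le_factorial_mul_choose {d : ℕ} (hd : d ≠ 0) :
    (2 : ℝ) ^ d - 1 ≤ d.factorial * (2 * d - 1).choose d := by
  have h : 2 ^ d ≤ d ^ d + 1 := by
    rcases Nat.lt_or_ge d 2 with h | h
    · interval_cases d <;> simp_all
    · exact (Nat.pow_le_pow_left h d).trans (Nat.le_succ _)
  have hdesc := Nat.pow_sub_le_descFactorial (2 * d - 1) d
  rw [Nat.descFactorial_eq_factorial_mul_choose, show 2 * d - 1 + 1 - d = d by omega] at hdesc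
  have : 2 ^ d ≤ d.factorial * (2 * d - 1).choose d + 1 := h.trans (by omega)
  rw [sub_le_iff_le_add]
  exact_mod_cast this

lemma sSup_sub_sInf_le_of_forall_abs_sub_le {S : Set ℝ} (hS : S.Nonempty) {a r : ℝ}
    (h : ∀ x ∈ S, |x - a| ≤ r) : sSup S - sInf S ≤ 2 * r := by
  have hsup : sSup S ≤ a + r := csSup_le hS fun x hx => by linarith [(abs_le.1 (h x hx)).2]
  have hinf : a - r ≤ sInf S := le_csInf hS fun x hx => by linarith [(abs_le.1 (h x hx)).1]
  linarith

section Estimates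

variable {n d : ℕ} (hn : 0 < n) (c : (Fin n → ℕ) → ℝ) {m M : ℝ}
  (hm : ∀ y ∈ stdSimplex ℝ (Fin n), m ≤ homPoly n d c y)
  (hM : ∀ y ∈ stdSimplex ℝ (Fin n), homPoly n d c y ≤ M)
include hn hm hM

lemma abs_homPoly_sub_mul_sum_pow_le {x : Fin n → ℝ} (hx : 0 ≤ x) :
    |homPoly n d c x - (m + M) / 2 * (∑ i, x i) ^ d| ≤ (M - m) / 2 * (∑ i, x i) ^ d := by
  have : Nonempty (Fin n) := Fin.pos_iff_nonempty.1 hn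
  obtain ⟨y, hy, hxy⟩ := exists_eq_sum_smul_mem_stdSimplex hx
  have ht : 0 ≤ (∑ i, x i) ^ d := pow_nonneg (sum_nonneg fun i _ => hx i) d
  rw [hxy, homPoly_smul, ← hxy, mul_comm _ (homPoly n d c y), ← sub_mul, abs_mul,
    abs_of_nonneg ht]
  exact mul_le_mul_of_nonneg_right (abs_le.2 ⟨by linarith [hm y hy], by linarith [hM y hy]⟩) ht

lemma le_of_forall_stdSimplex_bounds : m ≤ M := by
  have hy := single_mem_stdSimplex ℝ (⟨0, hn⟩ : Fin n)
  linarith [hm _ hy, hM _ hy]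

lemma abs_mul_prod_factorial_sub_le (hd : d ≠ 0) {β : Fin n → ℕ} (hβ : ∑ i, β i = d) :
    |c β * ∏ i, ((β i).factorial : ℝ) - d.factorial * ((m + M) / 2)| ≤
      (2 ^ d - 1) * d ^ d * ((M - m) / 2) := by
  set g : (Fin n → ℕ) → ℝ := fun α =>
    homPoly n d c (fun i => (α i : ℝ)) - (m + M) / 2 * (∑ i, (α i : ℝ)) ^ d
  have hid : c β * ∏ i, ((β i).factorial : ℝ) - d.factorial * ((m + M) / 2) =
      ∑ α ∈ Iic β, finDiffWeight β α * g α := by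
    have hpow := sum_Iic_finDiffWeight_mul_sum_pow β
    rw [hβ] at hpow
    simp only [g, mul_sub, sum_sub_distrib, mul_left_comm _ ((m + M) / 2), ← mul_sum, hpow,
      sum_Iic_finDiffWeight_mul_homPoly c hβ]
    ring
  have hg : ∀ α : Fin n → ℕ, |g α| ≤ (M - m) / 2 * (∑ i, (α i : ℝ)) ^ d := fun α =>
    abs_homPoly_sub_mul_sum_pow_le hn c hm hM fun i => Nat.cast_nonneg (α i)
  have hcount : ∑ α ∈ Iic β, (∏ i, ((β i).choose (α i) : ℝ)) * (∑ i, (α i : ℝ)) ^ d ≤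
      (2 ^ d - 1) * d ^ d := by
    have h := sum_Iic_prod_choose_mul_sum_pow_le β hd
    rw [hβ] at h
    have h' := (Nat.cast_le (α := ℝ)).2 h
    push_cast at h'
    linarith
  have hMm : 0 ≤ (M - m) / 2 := by linarith [le_of_forall_stdSimplex_bounds hn c hm hM]
  calc _ = |∑ α ∈ Iic β, finDiffWeight β α * g α| := by rw [hid]
    _ ≤ ∑ α ∈ Iic β, |finDiffWeight β α| * |g α| :=
      (abs_sum_le_sum_abs _ _).trans_eq (sum_congr rfl fun α _ => abs_mul _ _)
    _ ≤ ∑ α ∈ Iic β, (∏ i, ((β i).choose (α i) : ℝ)) * ((M - m) / 2 * (∑ i, (α i : ℝ)) ^ d) :=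
      sum_le_sum fun α _ => by
        rw [abs_finDiffWeight]
        exact mul_le_mul_of_nonneg_left (hg α) (by positivity)
    _ = (M - m) / 2 * ∑ α ∈ Iic β, (∏ i, ((β i).choose (α i) : ℝ)) * (∑ i, (α i : ℝ)) ^ d := by
      rw [mul_sum]
      exact sum_congr rfl fun α _ => by ring
    _ ≤ (M - m) / 2 * ((2 ^ d - 1) * d ^ d) := mul_le_mul_of_nonneg_left hcount hMm
    _ = (2 ^ d - 1) * d ^ d * ((M - m) / 2) := by ring

lemma abs_bernsteinCoeff_sub_le (hd : d ≠ 0) {β : Fin n → ℕ} (hβ : ∑ i, β i = d) :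
    |c β * (∏ i, ((β i).factorial : ℝ)) / d.factorial - (m + M) / 2| ≤
      (2 * d - 1).choose d * d ^ d * ((M - m) / 2) := by
  have hfac : (0 : ℝ) < d.factorial := by exact_mod_cast d.factorial_pos
  have hMm : 0 ≤ d ^ d * ((M - m) / 2) := by
    have := le_of_forall_stdSimplex_bounds hn c hm hM
    positivity
  rw [← mul_div_cancel_left₀ ((m + M) / 2) hfac.ne', ← sub_div, abs_div, abs_of_pos hfac,
    div_le_iff₀' hfac]
  calc _ ≤ (2 ^ d - 1) * d ^ d * ((M - m) / 2) :=
        abs_mul_prod_factorial_sub_le hn c hm hM hd hβ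
    _ ≤ d.factorial * (2 * d - 1).choose d * (d ^ d * ((M - m) / 2)) := by
      rw [mul_assoc]
      exact mul_le_mul_of_nonneg_right (two_pow_sub_one_le_factorial_mul_choose hd) hMm
    _ = _ := by ring

end Estimates

/-- for `f` homogeneous of degree `d ≥ 1`,
`max_β c_β β!/d! − min_β c_β β!/d! ≤ C(2d−1,d) d^d (f̄ − f̲)`. -/
theorem statement12 (n d : ℕ) (hn : 0 < n) (hd : 1 ≤ d) (c : (Fin n → ℕ) → ℝ) :
    sSup (bernsteinCoeffs n d c) - sInf (bernsteinCoeffs n d c) ≤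
      (Nat.choose (2 * d - 1) d : ℝ) * (d : ℝ) ^ d *
        (maxSimplex n (homPoly n d c) - minSimplex n (homPoly n d c)) := by
  have hf : ContinuousOn (homPoly n d c) (stdSimplex ℝ (Fin n)) :=
    (continuous_homPoly c).continuousOn
  have hne : (bernsteinCoeffs n d c).Nonempty := ⟨_, Pi.single ⟨0, hn⟩ d, by simp, rfl⟩
  have hbound : ∀ b ∈ bernsteinCoeffs n d c,
      |b - (minSimplex n (homPoly n d c) + maxSimplex n (homPoly n d c)) / 2| ≤
        (2 * d - 1).choose d * d ^ d *
          ((maxSimplex n (homPoly n d c) - minSimplex n (homPoly n d c)) / 2) := by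
    rintro _ ⟨β, hβ, rfl⟩
    exact abs_bernsteinCoeff_sub_le hn c (fun y hy => minSimplex_le hf hy)
      (fun y hy => le_maxSimplex hf hy) (by omega) hβ
  exact (sSup_sub_sInf_le_of_forall_abs_sub_le hne hbound).trans_eq (by ring)
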